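/- For each string g in the reduced logogram of SAT^{nm} (a minimal partial function on {1,...,nm} taking values in {1,2} with exactly one position prescribed per clause block), the word γ(g) obtained by extending g with 0 everywhere outside Dom(g) is a satisfiable CNF encoding that includes g and includes no other string of the reduced logogram; consequently |Log_CNF(SAT^{nm})| is irreducible: no proper subset of it is complete for (CNF^{nm}, SAT^{nm}). -/

import Mathlib

/-- A *string* over alphabet `σ`: a partial function `ℕ → σ` with finite domain. -/
def Str (σ : Type*) : Type _ := {f : ℕ → Option σ // {n | f n ≠ none}.Finite}

/-- Extension order on strings: `sle f g` iff `g` extends `f`, i.e.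
`Dom f ⊆ Dom g` and `g` agrees with `f` on `Dom f`. -/
def sle {σ : Type*} (f g : Str σ) : Prop := ∀ n a, f.1 n = some a → g.1 n = some a

/-- A *word*: a string whose domain is an initial segment `{1, …, l}` of the
positive integers. -/
def IsWord {σ : Type*} (x : Str σ) : Prop :=
  ∃ l : ℕ, ∀ k : ℕ, x.1 k ≠ none ↔ 1 ≤ k ∧ k ≤ l

/-- `ExpE E H`: the expansion of `H` relative to base `E`, the set of words of `E`
that include some string from `H`. -/
def ExpE {σ : Type*} (E H : Set (Str σ)) : Set (Str σ) :=
  {x | x ∈ E ∧ ∃ a ∈ H, sle a x}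

/-- `SigmaInf E`: the set of strings included in some word of `E`. -/
def SigmaInf {σ : Type*} (E : Set (Str σ)) : Set (Str σ) :=
  {g | ∃ x ∈ E, sle g x}

/-- `LogE E F`: the logogram of `F` relative to `E`. -/
def LogE {σ : Type*} (E F : Set (Str σ)) : Set (Str σ) :=
  {g | g ∈ SigmaInf E ∧ ∀ x ∈ E, sle g x → x ∈ ExpE E F}

/-- `Entangles E K H`, written `K ⊒^E H`: every word of `E` that includes a string
from `K` also includes a string from `H`. -/
def Entangles {σ : Type*} (E K H : Set (Str σ)) : Prop :=
  ∀ x ∈ E, (∃ k ∈ K, sle k x) → ∃ h ∈ H, sle h x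

/-- `H` is *complete* for the decision problem `(E, F)`. -/
def Complete {σ : Type*} (E F H : Set (Str σ)) : Prop :=
  ∀ x ∈ E, (x ∈ F ↔ ∃ f ∈ H, sle f x)

/-- The reduced logogram `|Log_E F|`: the minimal strings of `Log_E F`. -/
def redLog {σ : Type*} (E F : Set (Str σ)) : Set (Str σ) :=
  {g | g ∈ LogE E F ∧ ∀ h ∈ LogE E F, sle h g → h = g}

/-- Position of variable `j` (1-based) in clause `i` (1-based) in the matrix
encoding with `n` variables per clause block. -/
def pos (n i j : ℕ) : ℕ := (i - 1) * n + j

/-- The set of encodings of CNF formulas with `n` variables and `m` clauses: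
total functions on `{1, …, n*m}` with values in `{0,1,2}` (coded by `Fin 3`:
`0` = variable absent, `1` = positive literal, `2` = negative literal). -/
def CNFw (n m : ℕ) : Set (Str (Fin 3)) :=
  {x | ∀ k : ℕ, x.1 k ≠ none ↔ 1 ≤ k ∧ k ≤ n * m}

/-- The assignment `v` satisfies the encoded formula `x`: every clause contains a
literal made true by `v`. -/
def Satisfies (n m : ℕ) (v : ℕ → Bool) (x : Str (Fin 3)) : Prop :=
  ∀ i : ℕ, 1 ≤ i → i ≤ m → ∃ j : ℕ, 1 ≤ j ∧ j ≤ n ∧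
    ((x.1 (pos n i j) = some 1 ∧ v j = true) ∨
     (x.1 (pos n i j) = some 2 ∧ v j = false))

/-- The set of satisfiable CNF encodings with `n` variables and `m` clauses. -/
def SATw (n m : ℕ) : Set (Str (Fin 3)) :=
  {x | x ∈ CNFw n m ∧ ∃ v : ℕ → Bool, Satisfies n m v x}

/-- `γ(g)`: the word obtained from the string `g` by extending it with the
value `0` everywhere on `{1, …, n*m}` outside `Dom g`. -/
def gamma (n m : ℕ) (g : Str (Fin 3)) : Str (Fin 3) :=
  ⟨fun k => if 1 ≤ k ∧ k ≤ n * m then some ((g.1 k).getD 0) else none,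
   (Set.finite_Icc 1 (n * m)).subset (by
     intro k hk
     simp only [Set.mem_setOf_eq] at hk
     by_contra hmem
     simp only [Set.mem_Icc] at hmem
     exact hk (if_neg hmem))⟩

/-!
A string of the reduced logogram has no `0` entries: erasing a `0` keeps the forcing
property, because a satisfying assignment of the word with a `0` restored satisfies the
original word too, so minimality forbids it. Since `γ(g)` is `0` outside `Dom g`, every
zero-free string included in `γ(g)` is included in `g`, hence equals `g` if it lies in the
reduced logogram. A complete set must contain a string included in the satisfiable word
`γ(g)`, which can only be `g`.
-/

namespace Str

variable {σ : Type*}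

theorem sle_refl (x : Str σ) : sle x x := fun _ _ h => h

theorem sle_trans {x y z : Str σ} (hxy : sle x y) (hyz : sle y z) : sle x z :=
  fun k a h => hyz k a (hxy k a h)

theorem eq_of_sle_of_dom_subset {x y : Str σ} (hxy : sle x y)
    (hdom : ∀ k, y.1 k ≠ none → x.1 k ≠ none) : x = y := by
  apply Subtype.ext
  funext k
  cases hy : y.1 k with
  | none => cases hx : x.1 k with
    | none => rfl
    | some a => simpa [hy] using hxy k a hx
  | some b =>
    obtain ⟨a, ha⟩ := Option.ne_none_iff_exists'.mp (hdom k (by simp [hy]))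
    rw [ha, ← hy, hxy k a ha]

def erase (x : Str σ) (k : ℕ) : Str σ :=
  ⟨Function.update x.1 k none, x.2.subset fun i hi => by
    by_cases h : i = k
    · subst h; simp at hi
    · simpa [Function.update_of_ne h] using hi⟩

def update (x : Str σ) (k : ℕ) (a : σ) : Str σ :=
  ⟨Function.update x.1 k (some a), (x.2.insert k).subset fun i hi => by
    by_cases h : i = k
    · exact Or.inl h
    · exact Or.inr (by simpa [Function.update_of_ne h] using hi)⟩

theorem erase_sle (x : Str σ) (k : ℕ) : sle (x.erase k) x := by
  intro i a h
  by_cases hi : i = k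
  · subst hi; simp [erase] at h
  · simpa [erase, Function.update_of_ne hi] using h

theorem sle_update_of_erase_sle {x y : Str σ} {k : ℕ} {a : σ} (hk : x.1 k = some a)
    (h : sle (x.erase k) y) : sle x (y.update k a) := by
  intro i b hb
  by_cases hi : i = k
  · subst hi; rw [hk] at hb; simp [update, hb]
  · have hbx : (x.erase k).1 i = some b := by simpa [erase, Function.update_of_ne hi]
    simpa [update, Function.update_of_ne hi] using h i b hbx

end Str

section Logogram

variable {σ : Type*} {E F : Set (Str σ)}

theorem mem_SigmaInf_of_sle {g h : Str σ} (hg : g ∈ SigmaInf E) (hhg : sle h g) :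
    h ∈ SigmaInf E :=
  let ⟨x, hx, hgx⟩ := hg
  ⟨x, hx, Str.sle_trans hhg hgx⟩

theorem mem_LogE_iff (hE : ∀ x ∈ E, ∀ y ∈ E, sle x y → x = y) (hF : F ⊆ E) {g : Str σ} :
    g ∈ LogE E F ↔ g ∈ SigmaInf E ∧ ∀ x ∈ E, sle g x → x ∈ F := by
  refine and_congr_right fun _ => forall₂_congr fun x hx => imp_congr_right fun _ => ?_
  constructor
  · rintro ⟨-, a, haF, hax⟩
    rwa [← hE a (hF haF) x hx hax]
  · exact fun hxF => ⟨hx, x, hxF, Str.sle_refl x⟩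

theorem not_complete_of_ssubset {R H : Set (Str σ)}
    (hsep : ∀ g ∈ R, ∃ x ∈ E, x ∈ F ∧ ∀ h ∈ R, sle h x → h = g)
    (hHR : H ⊆ R) (hne : H ≠ R) : ¬ Complete E F H := by
  intro hcomp
  refine hne (hHR.antisymm fun g hg => ?_)
  obtain ⟨x, hxE, hxF, hunique⟩ := hsep g hg
  obtain ⟨f, hfH, hfx⟩ := (hcomp x hxE).mp hxF
  rwa [← hunique f (hHR hfH) hfx]

end Logogram

section CNF

variable {n m : ℕ}

theorem CNFw.eq_of_sle {x y : Str (Fin 3)} (hx : x ∈ CNFw n m) (hy : y ∈ CNFw n m)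
    (hxy : sle x y) : x = y :=
  Str.eq_of_sle_of_dom_subset hxy fun k hk => (hx k).mpr ((hy k).mp hk)

theorem SATw_subset_CNFw : SATw n m ⊆ CNFw n m := fun _ hx => hx.1

theorem mem_LogE_SATw_iff {g : Str (Fin 3)} :
    g ∈ LogE (CNFw n m) (SATw n m) ↔
      g ∈ SigmaInf (CNFw n m) ∧ ∀ x ∈ CNFw n m, sle g x → x ∈ SATw n m :=
  mem_LogE_iff (fun _ hx _ hy => CNFw.eq_of_sle hx hy) SATw_subset_CNFw

theorem mem_Icc_of_mem_SigmaInf_CNFw {g : Str (Fin 3)} (hg : g ∈ SigmaInf (CNFw n m)) {k : ℕ}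
    {a : Fin 3} (hk : g.1 k = some a) : 1 ≤ k ∧ k ≤ n * m :=
  let ⟨x, hx, hgx⟩ := hg
  (hx k).mp (by simp [hgx k a hk])

theorem Str.update_mem_CNFw {x : Str (Fin 3)} (hx : x ∈ CNFw n m) {k : ℕ}
    (hk : 1 ≤ k ∧ k ≤ n * m) (a : Fin 3) : x.update k a ∈ CNFw n m := by
  intro i
  by_cases hi : i = k
  · subst hi; simpa [Str.update] using hk
  · simpa [Str.update, Function.update_of_ne hi] using hx i

/-- Satisfied literals are never `0`, hence never at position `k`. -/
theorem Satisfies.of_update_zero {v : ℕ → Bool} {x : Str (Fin 3)} {k : ℕ}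
    (hv : Satisfies n m v (x.update k 0)) : Satisfies n m v x := by
  intro i hi₁ hi₂
  obtain ⟨j, hj₁, hj₂, hlit⟩ := hv i hi₁ hi₂
  have hne : pos n i j ≠ k := by
    rintro rfl
    rcases hlit with ⟨h, -⟩ | ⟨h, -⟩ <;> simp [Str.update] at h
  simp only [Str.update, Function.update_of_ne hne] at hlit
  exact ⟨j, hj₁, hj₂, hlit⟩

/-- Whatever a word puts at position `k`, setting it back to `0` only removes a literal. -/
theorem erase_mem_LogE_SATw {g : Str (Fin 3)} (hg : g ∈ LogE (CNFw n m) (SATw n m)) {k : ℕ}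
    (hk : g.1 k = some 0) : g.erase k ∈ LogE (CNFw n m) (SATw n m) := by
  rw [mem_LogE_SATw_iff] at hg ⊢
  refine ⟨mem_SigmaInf_of_sle hg.1 (g.erase_sle k), fun x hx hgx => ⟨hx, ?_⟩⟩
  have hx₀ : x.update k 0 ∈ CNFw n m :=
    x.update_mem_CNFw hx (mem_Icc_of_mem_SigmaInf_CNFw hg.1 hk) 0
  obtain ⟨-, v, hv⟩ := hg.2 _ hx₀ (Str.sle_update_of_erase_sle hk hgx)
  exact ⟨v, hv.of_update_zero⟩

theorem ne_zero_of_mem_redLog_SATw {g : Str (Fin 3)} (hg : g ∈ redLog (CNFw n m) (SATw n m))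
    {k : ℕ} {a : Fin 3} (hk : g.1 k = some a) : a ≠ 0 := by
  rintro rfl
  have heq : g.erase k = g := hg.2 _ (erase_mem_LogE_SATw hg.1 hk) (g.erase_sle k)
  have : (g.erase k).1 k = none := by simp [Str.erase]
  rw [heq, hk] at this
  exact Option.some_ne_none _ this

theorem gamma_mem_CNFw (g : Str (Fin 3)) : gamma n m g ∈ CNFw n m := by
  intro k
  by_cases hk : 1 ≤ k ∧ k ≤ n * m <;> simp [gamma, hk]

theorem sle_gamma {g : Str (Fin 3)} (hg : g ∈ SigmaInf (CNFw n m)) : sle g (gamma n m g) := by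
  intro k a hk
  simp [gamma, mem_Icc_of_mem_SigmaInf_CNFw hg hk, hk]

theorem sle_of_sle_gamma {g h : Str (Fin 3)} (hh : ∀ k a, h.1 k = some a → a ≠ 0)
    (hhg : sle h (gamma n m g)) : sle h g := by
  intro k a hk
  have hγ := hhg k a hk
  by_cases hrange : 1 ≤ k ∧ k ≤ n * m
  · cases hgk : g.1 k with
    | none => simp [gamma, hrange, hgk] at hγ; exact absurd hγ.symm (hh k a hk)
    | some b => simpa [gamma, hrange, hgk] using hγ
  · simp [gamma, hrange] at hγ

theorem gamma_isolates_mem_redLog_SATw {g : Str (Fin 3)}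
    (hg : g ∈ redLog (CNFw n m) (SATw n m)) :
    gamma n m g ∈ SATw n m ∧ sle g (gamma n m g) ∧
      ∀ h ∈ redLog (CNFw n m) (SATw n m), sle h (gamma n m g) → h = g := by
  obtain ⟨hg_sigma, hforce⟩ := mem_LogE_SATw_iff.mp hg.1
  refine ⟨hforce _ (gamma_mem_CNFw g) (sle_gamma hg_sigma), sle_gamma hg_sigma,
    fun h hh hhg => ?_⟩
  exact hg.2 h hh.1 (sle_of_sle_gamma (fun _ _ => ne_zero_of_mem_redLog_SATw hh) hhg)

end CNF

/-- for every string `g` of the reduced logogram of `SAT^{nm}`,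
the word `γ(g)` is a satisfiable CNF encoding that includes `g` and no other
string of the reduced logogram; consequently `|Log_CNF SAT^{nm}|` is
irreducible: no proper subset of it is complete for `(CNF^{nm}, SAT^{nm})`. -/
theorem sat_redLog_irreducible (n m : ℕ) :
    (∀ g ∈ redLog (CNFw n m) (SATw n m),
      gamma n m g ∈ SATw n m ∧ sle g (gamma n m g) ∧
      ∀ h ∈ redLog (CNFw n m) (SATw n m), sle h (gamma n m g) → h = g) ∧
    (∀ H ⊆ redLog (CNFw n m) (SATw n m), H ≠ redLog (CNFw n m) (SATw n m) →
      ¬ Complete (CNFw n m) (SATw n m) H) := by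
  refine ⟨fun g => gamma_isolates_mem_redLog_SATw, fun H hHR hne => ?_⟩
  refine not_complete_of_ssubset (fun g hg => ?_) hHR hne
  obtain ⟨hsat, -, hunique⟩ := gamma_isolates_mem_redLog_SATw hg
  exact ⟨gamma n m g, hsat.1, hsat, hunique⟩
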